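/- arXiv:1906.00294 — 4 statements merged into one kernel-verified Lean document; each statement's English description precedes it below -/
import Mathlib

section
/- Let T be a rooted tree with m ≥ 1 leaves labeled by binary vectors y₁,…,y_m ∈ {0,1}ⁿ, where each internal node v is labeled z_v = ⋁_{leaves ℓ under v} y_ℓ. Define c(T) = n + Σ_{v ∈ V(T)} ‖z_v‖₁ · deg(v). If every vector yᵢ has exactly one coordinate equal to 1 (multi-class case), and pⱼ = ‖yⱼ‖₁/n, then c(T) ≥ n + (3n/log₂3)·H(p₁,…,p_m), where H(p₁,…,p_m) = Σⱼ pⱼ log₂(1/pⱼ). -/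
/-- A rooted tree with leaves labeled by `α`. -/
inductive RTree (α : Type) where
  | leaf : α → RTree α
  | node : List (RTree α) → RTree α

namespace RTree

/-- The list of leaf labels of a tree. -/
def leaves {α : Type} : RTree α → List α
  | .leaf a => [a]
  | .node ts => (ts.attach.map (fun ⟨t, _⟩ => t.leaves)).flatten

end RTree

/-- Hamming weight of a binary vector. -/
def hw {n : ℕ} (z : Fin n → Bool) : ℕ := (Finset.univ.filter (fun i => z i = true)).card

/-- Coordinatewise OR of a list of binary vectors. -/
def orv {n : ℕ} (ys : List (Fin n → Bool)) : Fin n → Bool := fun i => ys.any (fun y => y i)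

/-- `∑_{v ∈ V(T)} ‖z_v‖₁ · deg(v)`, where `z_v` is the OR of the leaf labels below `v`
and `deg(v)` the number of children of `v` (0 for leaves). -/
def RTree.cost {n : ℕ} : RTree (Fin n → Bool) → ℕ
  | .leaf _ => 0
  | .node ts => hw (orv (RTree.leaves (.node ts))) * ts.length
      + (ts.attach.map (fun ⟨t, _⟩ => t.cost)).sum

/-!
For nonnegative weights `w₁, …, w_k` with total `W`, write `E(w) = ∑ -wᵢ log wᵢ + W log W`,
which is `W · H(w/W)`. If the leaf labels have disjoint supports, the weight `‖z_v‖₁` of a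
node is the total weight of the leaves below it, and the chain rule splits `E` of the leaf
weights below a node `v` with `k` children into `E` of the children's weights plus the sum of
`E` over the children. The first part is at most `‖z_v‖₁ log k`, and `3 log k ≤ k log 3` for
every natural `k`, so the contribution `‖z_v‖₁ · k` of `v` to the cost pays for
`(3 / log 3) · ‖z_v‖₁ log k`. By induction, `log 3 · cost ≥ 3 E(leaf weights)`; with total
weight `n` this is the claimed bound.
-/

open Real

namespace RTree

variable {α : Type}

theorem induction_on_children {motive : RTree α → Prop} (t : RTree α)
    (leaf : ∀ a, motive (.leaf a))
    (node : ∀ ts, (∀ t ∈ ts, motive t) → motive (.node ts)) : motive t :=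
  match t with
  | .leaf a => leaf a
  | .node ts => node ts fun t ht =>
      have : sizeOf t < sizeOf (RTree.node ts) := by
        have := List.sizeOf_lt_of_mem ht
        simp only [RTree.node.sizeOf_spec]; omega
      induction_on_children t leaf node
termination_by sizeOf t

theorem leaves_node (ts : List (RTree α)) : (node ts).leaves = (ts.map leaves).flatten := by
  simp [leaves]

theorem cost_node {n : ℕ} (ts : List (RTree (Fin n → Bool))) :
    (node ts).cost = hw (orv (node ts).leaves) * ts.length + (ts.map cost).sum := by
  simp [cost]

end RTree

theorem sum_map_hw_eq_sum_countP {n : ℕ} (L : List (Fin n → Bool)) :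
    (L.map hw).sum = ∑ i, L.countP (· i) := by
  induction L with
  | nil => simp
  | cons y L ih =>
    simp only [List.map_cons, List.sum_cons, ih, List.countP_cons, hw, Finset.card_filter,
      ← Finset.sum_add_distrib]
    exact Finset.sum_congr rfl fun i _ => Nat.add_comm _ _

theorem hw_orv_of_countP_le_one {n : ℕ} (L : List (Fin n → Bool))
    (h : ∀ i, L.countP (· i) ≤ 1) : hw (orv L) = (L.map hw).sum := by
  rw [sum_map_hw_eq_sum_countP, hw, Finset.card_filter]
  refine Finset.sum_congr rfl fun i _ => ?_
  have hpos : orv L i = true ↔ 0 < L.countP (· i) := by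
    simp [orv, List.countP_pos_iff]
  have := h i
  split_ifs with hi
  · have := hpos.mp hi; omega
  · have := mt hpos.mpr hi; omega

/-- For weights `w` with total `W`, this is `W · H(w₁/W, …, w_k/W)`. -/
noncomputable def unnormalizedEntropy (ws : List ℝ) : ℝ :=
  (ws.map negMulLog).sum - negMulLog ws.sum

theorem unnormalizedEntropy_flatten (wss : List (List ℝ)) :
    unnormalizedEntropy wss.flatten =
      (wss.map unnormalizedEntropy).sum + unnormalizedEntropy (wss.map List.sum) := by
  induction wss with
  | nil => simp [unnormalizedEntropy]
  | cons ws wss ih =>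
    simp only [unnormalizedEntropy, List.flatten_cons, List.map_append, List.sum_append,
      List.map_cons, List.sum_cons, List.sum_flatten] at ih ⊢
    linarith

theorem negMulLog_le_tangent {w c : ℝ} (hw : 0 ≤ w) (hc : 0 < c) :
    negMulLog w ≤ c - w - w * log c := by
  calc negMulLog w = w / c * negMulLog c + c * negMulLog (w / c) := by
        rw [← negMulLog_mul, mul_div_cancel₀ w hc.ne']
    _ ≤ w / c * negMulLog c + c * (1 - w / c) := by
        gcongr
        exact negMulLog_le_one_sub_self (div_nonneg hw hc.le)
    _ = c - w - w * log c := by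
        rw [negMulLog]
        field_simp
        ring

theorem unnormalizedEntropy_le_sum_mul_log_length (ws : List ℝ) (h : ∀ w ∈ ws, 0 ≤ w) :
    unnormalizedEntropy ws ≤ ws.sum * log ws.length := by
  rcases (List.sum_nonneg h).eq_or_lt with hW | hW
  · have hzero : ∀ w ∈ ws, negMulLog w = 0 := fun w hw => by
      rw [List.all_zero_of_le_zero_le_of_sum_eq_zero h hW.symm hw, negMulLog_zero]
    simp [unnormalizedEntropy, List.map_congr_left hzero, ← hW]
  have hk : (0 : ℝ) < ws.length := by
    exact_mod_cast List.length_pos_of_ne_nil (by rintro rfl; simp at hW)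
  set c := ws.sum / ws.length
  have hc : 0 < c := div_pos hW hk
  have hsum : ∀ l : List ℝ,
      (l.map fun w => c - w - w * log c).sum = l.length * c - l.sum - l.sum * log c := by
    intro l
    induction l with
    | nil => simp
    | cons w l ih => simp only [List.map_cons, List.sum_cons, ih, List.length_cons]; push_cast; ring
  calc unnormalizedEntropy ws
      ≤ (ws.map fun w => c - w - w * log c).sum - negMulLog ws.sum :=
        sub_le_sub_right (List.sum_le_sum fun w hw => negMulLog_le_tangent (h w hw) hc) _
    _ = ws.sum * log ws.length := by
        rw [hsum, log_div hW.ne' hk.ne', negMulLog, mul_div_cancel₀ _ hk.ne']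
        ring

theorem unnormalizedEntropy_eq_sum_mul_log_div (ws : List ℝ) (hW : ws.sum ≠ 0) :
    unnormalizedEntropy ws = (ws.map fun w => w * log (ws.sum / w)).sum := by
  have hterm : ∀ w ∈ ws, w * log (ws.sum / w) = negMulLog w + w * log ws.sum := fun w _ => by
    rcases eq_or_ne w 0 with rfl | hw
    · simp
    · rw [log_div hW hw, negMulLog]; ring
  rw [List.map_congr_left hterm, List.sum_map_add, List.sum_map_mul_right, unnormalizedEntropy,
    negMulLog, List.map_id']
  ring

theorem three_mul_log_le_mul_log_three (k : ℕ) : 3 * log k ≤ k * log 3 := by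
  have hlog3 : 0 < log 3 := log_pos (by norm_num)
  match k with
  | 0 => simp
  | 1 => simpa using hlog3.le
  | 2 =>
    have := log_le_log (by norm_num) (show (2 : ℝ) ^ 3 ≤ 3 ^ 2 by norm_num)
    simp only [log_pow] at this
    push_cast at this ⊢
    linarith
  | k + 3 =>
    -- `log x / x` is antitone on `[e, ∞)`, and `e ≤ 3`
    have he : exp 1 ≤ 3 := exp_one_lt_d9.le.trans (by norm_num)
    have hk : (3 : ℝ) ≤ (k + 3 : ℕ) := by push_cast; linarith [k.cast_nonneg (α := ℝ)]
    have := log_div_self_antitoneOn (Set.mem_ofPred.mpr he) (Set.mem_ofPred.mpr (he.trans hk)) hk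
    rw [div_le_div_iff₀ (by linarith) (by norm_num)] at this
    linarith

namespace RTree

variable {n : ℕ}

noncomputable def leafWeights (t : RTree (Fin n → Bool)) : List ℝ :=
  t.leaves.map fun y => (hw y : ℝ)

theorem leafWeights_node (ts : List (RTree (Fin n → Bool))) :
    (node ts).leafWeights = (ts.map leafWeights).flatten := by
  simp only [leafWeights, leaves_node, List.map_flatten, List.map_map]
  rfl

theorem sum_leafWeights_of_countP_eq_one (t : RTree (Fin n → Bool))
    (h : ∀ i, t.leaves.countP (· i) = 1) : t.leafWeights.sum = n := by
  have := sum_map_hw_eq_sum_countP t.leaves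
  simp only [h, Finset.sum_const, Finset.card_univ, Fintype.card_fin, smul_eq_mul,
    mul_one] at this
  simpa [leafWeights, Nat.cast_list_sum, Function.comp_def] using
    congrArg (Nat.cast : ℕ → ℝ) this

theorem countP_le_one_of_mem {ts : List (RTree (Fin n → Bool))}
    (h : ∀ i, (node ts).leaves.countP (· i) ≤ 1) {t : RTree (Fin n → Bool)} (ht : t ∈ ts)
    (i : Fin n) :
    t.leaves.countP (· i) ≤ 1 :=
  (List.le_sum_of_mem (List.mem_map_of_mem ht)).trans
    (by simpa [leaves_node, List.countP_flatten, List.map_map] using h i)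

theorem cost_node_of_countP_le_one (ts : List (RTree (Fin n → Bool)))
    (h : ∀ i, (node ts).leaves.countP (· i) ≤ 1) :
    ((node ts).cost : ℝ) =
      (node ts).leafWeights.sum * ts.length + (ts.map fun t => (t.cost : ℝ)).sum := by
  rw [cost_node, hw_orv_of_countP_le_one _ h, leafWeights]
  push_cast [Nat.cast_list_sum, List.map_map]
  rfl

theorem three_mul_unnormalizedEntropy_leafWeights_le (t : RTree (Fin n → Bool))
    (h : ∀ i, t.leaves.countP (· i) ≤ 1) :
    3 * unnormalizedEntropy t.leafWeights ≤ log 3 * t.cost := by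
  induction t using induction_on_children with
  | leaf a => simp [unnormalizedEntropy, leafWeights, leaves, cost]
  | node ts ih =>
    set ws := (ts.map leafWeights).map List.sum
    have hchildren : 3 * ((ts.map leafWeights).map unnormalizedEntropy).sum
        ≤ log 3 * (ts.map fun t => (t.cost : ℝ)).sum := by
      rw [List.map_map, ← List.sum_map_mul_left, ← List.sum_map_mul_left]
      exact List.sum_le_sum fun t ht => ih t ht (countP_le_one_of_mem h ht)
    have hws_nonneg : ∀ w ∈ ws, 0 ≤ w := by
      simp only [ws, List.map_map, List.mem_map, forall_exists_index, and_imp,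
        forall_apply_eq_imp_iff₂]
      exact fun t _ => List.sum_nonneg (by simp [leafWeights])
    have hgroup := unnormalizedEntropy_le_sum_mul_log_length ws hws_nonneg
    have hlog := mul_le_mul_of_nonneg_left (three_mul_log_le_mul_log_three ts.length)
      (List.sum_nonneg hws_nonneg)
    rw [cost_node_of_countP_le_one ts h, leafWeights_node, unnormalizedEntropy_flatten,
      List.sum_flatten]
    simp only [ws, List.length_map] at hgroup hlog
    linarith

end RTree

/-- Multi-class lower bound: if the leaf-label columns have disjoint supports covering `[n]`
(each example has exactly one label), then
`c(T) = n + ∑_v ‖z_v‖₁·deg(v) ≥ n + (3n/log₂3)·H(p₁,…,p_m)` with `pⱼ = ‖yⱼ‖₁/n`. -/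
theorem stmt_3 (n : ℕ) (t : RTree (Fin n → Bool))
    (hmc : ∀ i : Fin n, (t.leaves.countP (fun y => y i)) = 1) :
    (n : ℝ) + t.cost ≥
      (n : ℝ) + (3 * n / Real.logb 2 3) *
        (t.leaves.map (fun y =>
          ((hw y : ℝ) / n) * Real.logb 2 ((hw y : ℝ) / n)⁻¹)).sum := by
  rcases Nat.eq_zero_or_pos n with rfl | hn
  · simp
  have hsum := t.sum_leafWeights_of_countP_eq_one hmc
  have hlog3 : 0 < log 3 := log_pos (by norm_num)
  have hentropy : (3 * n / logb 2 3) *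
      (t.leaves.map fun y => ((hw y : ℝ) / n) * logb 2 ((hw y : ℝ) / n)⁻¹).sum =
      3 / log 3 * unnormalizedEntropy t.leafWeights := by
    rw [unnormalizedEntropy_eq_sum_mul_log_div _ (by rw [hsum]; positivity), hsum,
      RTree.leafWeights, List.map_map,
      ← List.sum_map_mul_left, ← List.sum_map_mul_left]
    refine congrArg List.sum (List.map_congr_left fun y _ => ?_)
    have hlog2 : 0 < log 2 := log_pos (by norm_num)
    simp only [Function.comp_apply, inv_div, logb]
    field_simp
  rw [ge_iff_le, add_le_add_iff_left, hentropy, div_mul_eq_mul_div, div_le_iff₀ hlog3,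
    mul_comm _ (log 3)]
  exact t.three_mul_unnormalizedEntropy_leafWeights_le fun i => (hmc i).le
end

section
/- Let v be a node of a tree with children v₁,…,v_k labeled by binary vectors ż_{v₁},…,ż_{v_k} ∈ {0,1}ⁿ with ‖ż_{v₁}‖₁ ≤ … ≤ ‖ż_{v_k}‖₁, and k ≥ 4. Replace children v₁,…,v_{k−2} by a new node u that becomes a child of v (so v has children v_{k−1}, v_k, u and u has children v₁,…,v_{k−2}). Then the new local cost 3·‖⋁ᵢ ż_{vᵢ}‖₁ + (k−2)·‖⋁_{i≤k−2} ż_{vᵢ}‖₁ is at most the old local cost k·‖⋁ᵢ ż_{vᵢ}‖₁. -/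
/-!
With pairwise disjoint supports, the weight of an OR is the sum of the weights, so the claim is
about a nondecreasing list `w₁ ≤ … ≤ w_k` of naturals with sum `S` and partial sum
`T = w₁ + ⋯ + w_{k-2}`. The smallest `k - 2` entries have at most the average weight,
`k T ≤ (k - 2) S`, and then `(k - 2) T ≤ (k - 2)² S / k ≤ (k - 3) S` because
`(k - 2)² ≤ k (k - 3)` exactly when `k ≥ 4`.
-/

namespace List

variable {M : Type*} [AddCommMonoid M] [PartialOrder M] [IsOrderedAddMonoid M]

theorem length_nsmul_sum_le_length_nsmul_sum {l₁ l₂ : List M}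
    (h : ∀ a ∈ l₁, ∀ b ∈ l₂, a ≤ b) : l₂.length • l₁.sum ≤ l₁.length • l₂.sum := by
  induction l₁ with
  | nil => simp
  | cons a l₁ ih =>
    have ha : l₂.length • a ≤ l₂.sum := card_nsmul_le_sum l₂ a (h a mem_cons_self)
    have hl₁ := ih fun x hx => h x (mem_cons_of_mem a hx)
    rw [sum_cons, nsmul_add, length_cons, succ_nsmul']
    exact add_le_add ha hl₁

theorem length_nsmul_sum_take_le {l : List M} (hl : l.Pairwise (· ≤ ·)) (m : ℕ) :
    l.length • (l.take m).sum ≤ (l.take m).length • l.sum := by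
  have hcross : (l.drop m).length • (l.take m).sum ≤ (l.take m).length • (l.drop m).sum :=
    length_nsmul_sum_le_length_nsmul_sum
      (pairwise_append.mp ((take_append_drop m l).symm ▸ hl)).2.2
  have hlength : (l.take m).length + (l.drop m).length = l.length := by
    rw [← length_append, take_append_drop]
  rw [← hlength, ← sum_take_add_sum_drop l m, add_nsmul, nsmul_add]
  exact add_le_add_right hcross _

end List

theorem hw_or_of_disjoint {n : ℕ} (a b : Fin n → Bool) (h : ∀ i, ¬(a i = true ∧ b i = true)) :
    hw (fun i => a i || b i) = hw a + hw b := by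
  unfold hw
  rw [← Finset.card_union_of_disjoint (Finset.disjoint_filter.mpr fun i _ => not_and.mp (h i))]
  congr 1
  ext i
  simp [Bool.or_eq_true]

theorem orv_cons {n : ℕ} (a : Fin n → Bool) (l : List (Fin n → Bool)) :
    orv (a :: l) = fun i => a i || orv l i := by
  funext i
  simp [orv]

theorem hw_orv_of_pairwise_disjoint {n : ℕ} {l : List (Fin n → Bool)}
    (h : l.Pairwise (fun a b => ∀ i, ¬(a i = true ∧ b i = true))) :
    hw (orv l) = (l.map hw).sum := by
  induction l with
  | nil => simp [orv, hw]
  | cons a l ih =>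
    rw [List.pairwise_cons] at h
    have hdisj : ∀ i, ¬(a i = true ∧ orv l i = true) := by
      rintro i ⟨ha, hl⟩
      obtain ⟨b, hb, hbi⟩ := List.any_eq_true.mp hl
      exact h.1 b hb i ⟨ha, hbi⟩
    rw [orv_cons, hw_or_of_disjoint a (orv l) hdisj, List.map_cons, List.sum_cons, ih h.2]

theorem cost_le_of_mul_le {k S T : ℕ} (hk : 4 ≤ k) (hT : k * T ≤ (k - 2) * S) :
    3 * S + (k - 2) * T ≤ k * S := by
  obtain ⟨j, rfl⟩ := Nat.exists_eq_add_of_le' hk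
  rw [show j + 4 - 2 = j + 2 by omega] at hT ⊢
  have hscaled : (j + 4) * ((j + 2) * T) ≤ (j + 4) * ((j + 1) * S) :=
    calc (j + 4) * ((j + 2) * T) = (j + 2) * ((j + 4) * T) := by ring
      _ ≤ (j + 2) * ((j + 2) * S) := Nat.mul_le_mul_left _ hT
      _ ≤ (j + 4) * ((j + 1) * S) := by nlinarith
  linarith [Nat.le_of_mul_le_mul_left hscaled (by omega)]

/-- Multi-class local transformation: if a node has `k ≥ 4` children labeled by vectors
with pairwise disjoint supports and nondecreasing Hamming weights, then moving the first
`k−2` children under a new node does not increase the local cost: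
`3·‖⋁ᵢ żᵢ‖₁ + (k−2)·‖⋁_{i≤k−2} żᵢ‖₁ ≤ k·‖⋁ᵢ żᵢ‖₁`. -/
theorem stmt_13 (n : ℕ) (zs : List (Fin n → Bool)) (hk : 4 ≤ zs.length)
    (hdisj : zs.Pairwise (fun a b => ∀ i, ¬(a i = true ∧ b i = true)))
    (hsorted : (zs.map hw).Pairwise (· ≤ ·)) :
    3 * hw (orv zs) + (zs.length - 2) * hw (orv (zs.take (zs.length - 2))) ≤
      zs.length * hw (orv zs) := by
  have hT := (zs.map hw).length_nsmul_sum_take_le hsorted (zs.length - 2)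
  rw [← List.map_take, ← hw_orv_of_pairwise_disjoint hdisj,
    ← hw_orv_of_pairwise_disjoint (hdisj.sublist (List.take_sublist _ _))] at hT
  simp only [List.length_map, List.length_take, smul_eq_mul] at hT
  exact cost_le_of_mul_le hk (by rwa [min_eq_left (by omega)] at hT)
end

section
/- Let a₁ ≤ a₂ ≤ … ≤ a_n be a nondecreasing sequence of nonnegative reals and define w(i,j) for 0 ≤ i < j ≤ n by w(i,j) = (j−i+1)·a_j if i > 0 and w(0,j) = j·a_j. Then w is concave: for all 0 ≤ i₀ < i₁ < j₀ < j₁ ≤ n, w(i₀,j₀) + w(i₁,j₁) ≤ w(i₀,j₁) + w(i₁,j₀). -/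
/-- Quadrangle (inverse-Monge/concavity) inequality for the nested multi-label cost:
with `a₁ ≤ … ≤ a_n` nonnegative and `w(i,j) = (j−i+1)·a_j` for `i > 0`, `w(0,j) = j·a_j`,
one has `w(i₀,j₀) + w(i₁,j₁) ≤ w(i₀,j₁) + w(i₁,j₀)` for all `0 ≤ i₀ < i₁ < j₀ < j₁ ≤ n`. -/
theorem stmt_14 (n : ℕ) (a : ℕ → ℝ)
    (hnonneg : ∀ i, 1 ≤ i → i ≤ n → 0 ≤ a i)
    (hmono : ∀ i j, 1 ≤ i → i ≤ j → j ≤ n → a i ≤ a j)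
    (w : ℕ → ℕ → ℝ)
    (hw : ∀ i j, w i j = if 0 < i then ((j - i + 1 : ℕ) : ℝ) * a j else (j : ℝ) * a j)
    (i₀ i₁ j₀ j₁ : ℕ) (h₀ : i₀ < i₁) (h₁ : i₁ < j₀) (h₂ : j₀ < j₁) (h₃ : j₁ ≤ n) :
    w i₀ j₀ + w i₁ j₁ ≤ w i₀ j₁ + w i₁ j₀ := by
  have haj : a j₀ ≤ a j₁ := hmono j₀ j₁ (by omega) (by omega) h₃
  have hi1 : 0 < i₁ := by omega
  have c1 : ((j₀ - i₁ + 1 : ℕ) : ℝ) = (j₀ : ℝ) - i₁ + 1 := by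
    have : i₁ ≤ j₀ := by omega
    push_cast [this]; ring
  have c2 : ((j₁ - i₁ + 1 : ℕ) : ℝ) = (j₁ : ℝ) - i₁ + 1 := by
    have : i₁ ≤ j₁ := by omega
    push_cast [this]; ring
  rw [hw, hw, hw, hw]
  rcases Nat.eq_zero_or_pos i₀ with h | h
  · subst h
    simp only [lt_irrefl, if_false, if_pos hi1, c1, c2]
    have : (1:ℝ) ≤ i₁ := by exact_mod_cast hi1
    nlinarith [haj]
  · have c3 : ((j₀ - i₀ + 1 : ℕ) : ℝ) = (j₀ : ℝ) - i₀ + 1 := by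
      have : i₀ ≤ j₀ := by omega
      push_cast [this]; ring
    have c4 : ((j₁ - i₀ + 1 : ℕ) : ℝ) = (j₁ : ℝ) - i₀ + 1 := by
      have : i₀ ≤ j₁ := by omega
      push_cast [this]; ring
    simp only [if_pos h, if_pos hi1, c1, c2, c3, c4]
    have : (i₀:ℝ) < i₁ := by exact_mod_cast h₀
    nlinarith [haj]
end

section
/- Let T be a rooted label tree with node probability estimates η̂_v(x) ∈ [0,1] satisfying the normalization η̂_v(x) ≤ min(1, Σ_{v' child of v} η̂_{v'}(x)) and max_{v' child of v} η̂_{v'}(x) ≤ η̂_v(x), for all internal v. For a threshold τ ∈ (0,1], the prediction cost c_τ(T,x) = 1 + Σ_{v ∈ V(T)} 1{η̂_v(x) ≥ τ}·deg(v) satisfies c_τ(T,x) ≤ 1 + ⌊P̂/τ⌋·depth(T)·Δ(T), where P̂ = Σ_{leaves ℓ} η̂_ℓ(x), depth(T) is the tree depth and Δ(T) the maximum degree. -/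
/-- A rooted tree in which every node carries a real value (a probability estimate `η̂_v(x)`). -/
inductive VTree where
  | leaf : ℝ → VTree
  | node : ℝ → List VTree → VTree

namespace VTree

/-- The value attached to the root of the (sub)tree. -/
def val : VTree → ℝ
  | .leaf r => r
  | .node r _ => r

/-- All values lie in `[0,1]` and the normalization properties hold at every internal node:
`η̂_v ≤ min(1, ∑_{v' child of v} η̂_{v'})` and `max_{v' child of v} η̂_{v'} ≤ η̂_v`. -/
def Valid : VTree → Prop
  | .leaf r => 0 ≤ r ∧ r ≤ 1
  | .node r ts => 0 ≤ r ∧ r ≤ 1 ∧ r ≤ min 1 ((ts.map val).sum) ∧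
      (∀ c ∈ ts, c.val ≤ r) ∧ ∀ c ∈ ts, c.Valid

/-- `∑_{v ∈ V(T)} 1{η̂_v ≥ τ}·deg(v)`, i.e. the prediction cost minus one. -/
noncomputable def costTau (τ : ℝ) : VTree → ℕ
  | .leaf _ => 0
  | .node r ts => (if τ ≤ r then ts.length else 0)
      + (ts.attach.map (fun ⟨t, _⟩ => t.costTau τ)).sum

/-- Depth of the tree: maximum number of edges on a root-to-leaf path. -/
def depth : VTree → ℕ
  | .leaf _ => 0
  | .node _ ts => 1 + (ts.attach.map (fun ⟨t, _⟩ => t.depth)).foldr max 0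

/-- Maximum degree (number of children) over all nodes. -/
def maxdeg : VTree → ℕ
  | .leaf _ => 0
  | .node _ ts => max ts.length ((ts.attach.map (fun ⟨t, _⟩ => t.maxdeg)).foldr max 0)

/-- `P̂ = ∑_{leaves ℓ} η̂_ℓ(x)`. -/
def leafSum : VTree → ℝ
  | .leaf r => r
  | .node _ ts => (ts.attach.map (fun ⟨t, _⟩ => t.leafSum)).sum

end VTree

/-! The cost is bounded by induction on the tree. At a node `v` with `τ ≤ η̂_v`, the normalization
gives `τ ≤ η̂_v ≤ ∑_{children} η̂ ≤ P̂_v`, so `⌊P̂_v/τ⌋ ≥ 1` pays for the `deg v ≤ Δ` at the root;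
the children's bounds add up because `∑ ⌊P̂_c/τ⌋ ≤ ⌊∑ P̂_c/τ⌋` and each child is one level shallower. -/

theorem Nat.floor_add_floor_le {R : Type*} [Semiring R] [LinearOrder R] [IsStrictOrderedRing R]
    [FloorSemiring R] {a b : R} (ha : 0 ≤ a) (hb : 0 ≤ b) : ⌊a⌋₊ + ⌊b⌋₊ ≤ ⌊a + b⌋₊ := by
  rw [Nat.le_floor_iff (add_nonneg ha hb)]
  push_cast
  exact _root_.add_le_add (floor_le ha) (floor_le hb)

theorem List.sum_map_floor_le_floor_sum {ι R : Type*} [Semiring R] [LinearOrder R]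
    [IsStrictOrderedRing R] [FloorSemiring R] (l : List ι) (f : ι → R) (hf : ∀ i ∈ l, 0 ≤ f i) :
    (l.map fun i => ⌊f i⌋₊).sum ≤ ⌊(l.map f).sum⌋₊ := by
  induction l with
  | nil => simp
  | cons i l ih =>
    rw [List.forall_mem_cons] at hf
    simp only [List.map_cons, List.sum_cons]
    calc ⌊f i⌋₊ + (l.map fun i => ⌊f i⌋₊).sum ≤ ⌊f i⌋₊ + ⌊(l.map f).sum⌋₊ :=
          Nat.add_le_add_left (ih hf.2) _
      _ ≤ ⌊f i + (l.map f).sum⌋₊ :=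
          Nat.floor_add_floor_le hf.1 (List.sum_nonneg fun _ hx => by
            obtain ⟨j, hj, rfl⟩ := List.mem_map.mp hx; exact hf.2 j hj)

namespace VTree

@[induction_eliminator]
theorem induction_mem {motive : VTree → Prop} (leaf : ∀ r, motive (.leaf r))
    (node : ∀ r ts, (∀ c ∈ ts, motive c) → motive (.node r ts)) : ∀ t, motive t
  | .leaf r => leaf r
  | .node r ts => node r ts fun c _ => induction_mem leaf node c

@[simp]
theorem costTau_node (τ r : ℝ) (ts : List VTree) :
    (node r ts).costTau τ = (if τ ≤ r then ts.length else 0) + (ts.map (costTau τ)).sum := by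
  simp [costTau]

@[simp]
theorem depth_node (r : ℝ) (ts : List VTree) :
    (node r ts).depth = 1 + (ts.map depth).foldr max 0 := by
  simp [depth]

@[simp]
theorem maxdeg_node (r : ℝ) (ts : List VTree) :
    (node r ts).maxdeg = max ts.length ((ts.map maxdeg).foldr max 0) := by
  simp [maxdeg]

@[simp]
theorem leafSum_node (r : ℝ) (ts : List VTree) :
    (node r ts).leafSum = (ts.map leafSum).sum := by
  simp [leafSum]

theorem Valid.of_mem {r : ℝ} {ts : List VTree} (h : (node r ts).Valid) {c : VTree} (hc : c ∈ ts) :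
    c.Valid := by
  unfold Valid at h
  exact h.2.2.2.2 c hc

theorem Valid.le_sum_val {r : ℝ} {ts : List VTree} (h : (node r ts).Valid) :
    r ≤ (ts.map val).sum := by
  unfold Valid at h
  exact h.2.2.1.trans (min_le_right _ _)

theorem length_le_maxdeg (r : ℝ) (ts : List VTree) : ts.length ≤ (node r ts).maxdeg := by
  simp

theorem maxdeg_le_of_mem {r : ℝ} {ts : List VTree} {c : VTree} (hc : c ∈ ts) :
    c.maxdeg ≤ (node r ts).maxdeg := by
  simpa using Or.inr (List.le_max_of_le' 0 (List.mem_map_of_mem hc) le_rfl)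

theorem depth_le_of_mem {ts : List VTree} {c : VTree} (hc : c ∈ ts) :
    c.depth ≤ (ts.map depth).foldr max 0 :=
  List.le_max_of_le' 0 (List.mem_map_of_mem hc) le_rfl

theorem Valid.leafSum_nonneg {t : VTree} (h : t.Valid) : 0 ≤ t.leafSum := by
  induction t with
  | leaf r =>
    unfold Valid at h
    simpa [leafSum] using h.1
  | node r ts ih =>
    rw [leafSum_node]
    exact List.sum_nonneg fun x hx => by
      obtain ⟨c, hc, rfl⟩ := List.mem_map.mp hx
      exact ih c hc (h.of_mem hc)

theorem Valid.val_le_leafSum {t : VTree} (h : t.Valid) : t.val ≤ t.leafSum := by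
  induction t with
  | leaf r => simp [val, leafSum]
  | node r ts ih =>
    rw [leafSum_node]
    calc (node r ts).val = r := rfl
      _ ≤ (ts.map val).sum := h.le_sum_val
      _ ≤ (ts.map leafSum).sum := List.sum_le_sum fun c hc => ih c hc (h.of_mem hc)

theorem Valid.sum_floor_leafSum_div_le {r τ : ℝ} {ts : List VTree} (h : (node r ts).Valid)
    (hτ : 0 < τ) :
    (ts.map fun c => ⌊c.leafSum / τ⌋₊).sum ≤ ⌊(node r ts).leafSum / τ⌋₊ := by
  rw [leafSum_node, div_eq_mul_inv, ← List.sum_map_mul_right]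
  exact List.sum_map_floor_le_floor_sum ts _ fun c hc =>
    mul_nonneg (h.of_mem hc).leafSum_nonneg (inv_nonneg.mpr hτ.le)

theorem Valid.costTau_le {t : VTree} (h : t.Valid) {τ : ℝ} (hτ : 0 < τ) :
    t.costTau τ ≤ ⌊t.leafSum / τ⌋₊ * t.depth * t.maxdeg := by
  induction t with
  | leaf r => simp [costTau]
  | node r ts ih =>
    set N := ⌊(node r ts).leafSum / τ⌋₊
    set D := (ts.map depth).foldr max 0
    set M := (node r ts).maxdeg
    have root : (if τ ≤ r then ts.length else 0) ≤ N * M := by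
      split_ifs with hr
      · have hN : 1 ≤ N := Nat.one_le_floor_iff _ |>.mpr <| (one_le_div hτ).mpr <|
          hr.trans h.val_le_leafSum
        calc ts.length ≤ M := length_le_maxdeg r ts
          _ ≤ N * M := Nat.le_mul_of_pos_left M hN
      · exact Nat.zero_le _
    have children : (ts.map (costTau τ)).sum ≤ N * D * M :=
      calc (ts.map (costTau τ)).sum ≤ (ts.map fun c => ⌊c.leafSum / τ⌋₊ * (D * M)).sum :=
            List.sum_le_sum fun c hc => (ih c hc (h.of_mem hc)).trans <| by
              rw [mul_assoc]
              exact Nat.mul_le_mul_left _ (Nat.mul_le_mul (depth_le_of_mem hc)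
                (maxdeg_le_of_mem hc))
        _ = (ts.map fun c => ⌊c.leafSum / τ⌋₊).sum * (D * M) := List.sum_map_mul_right ..
        _ ≤ N * (D * M) := Nat.mul_le_mul_right _ (h.sum_floor_leafSum_div_le hτ)
        _ = N * D * M := (mul_assoc ..).symm
    calc (node r ts).costTau τ ≤ N * M + N * D * M := by
          rw [costTau_node]; exact Nat.add_le_add root children
      _ = N * (node r ts).depth * M := by rw [depth_node]; ring

end VTree

theorem stmt_17_general (t : VTree) (hv : t.Valid) (τ : ℝ) (hτ0 : 0 < τ) :
    1 + t.costTau τ ≤ 1 + ⌊t.leafSum / τ⌋₊ * t.depth * t.maxdeg :=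
  Nat.add_le_add_left (hv.costTau_le hτ0) 1

/-- Prediction-cost bound: for a normalized estimate tree and threshold `τ ∈ (0,1]`,
`c_τ(T,x) = 1 + ∑_v 1{η̂_v ≥ τ}·deg(v) ≤ 1 + ⌊P̂/τ⌋·depth(T)·Δ(T)`. -/
theorem stmt_17 (t : VTree) (hv : t.Valid) (τ : ℝ) (hτ0 : 0 < τ) (hτ1 : τ ≤ 1) :
    1 + t.costTau τ ≤ 1 + ⌊t.leafSum / τ⌋₊ * t.depth * t.maxdeg :=
  stmt_17_general t hv τ hτ0
end
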